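/- arXiv:1109.0703 — 8 statements merged into one kernel-verified Lean document; each statement's English description precedes it below -/
import Mathlib

section
/- Let y₀ ∈ ℝ, b > 0, and let p : ℝ → ℝ be continuous, strictly positive, strictly decreasing and strictly convex on [y₀, ∞). Suppose Y ≥ y₀ satisfies ∫_{y₀}^{Y} p(y) dy = b. If h > 0 and natural numbers n₁ < n₂ with n₁ ≥ 1 satisfy S_t(h,n₁) ≤ b ≤ S_l(h,n₂), then y₀ + h·n₁ < Y < y₀ + h·n₂. -/
/-!
On each cell `[y₀ + i h, y₀ + (i + 1) h]` of the grid, a strictly decreasing `p` lies strictly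
above its value at the right endpoint, and a strictly convex `p` lies strictly below its chord.
Summing over the cells, `S_l(h, n₂)` and `S_t(h, n₁)` bound the integral of `p` up to
`y₀ + h n₂` from below and up to `y₀ + h n₁` from above, strictly. Since `p > 0`, the integral
`X ↦ ∫_{y₀}^X p` is monotone, so `b = ∫_{y₀}^Y p` places `Y` strictly between the two points.
-/

open Set Finset

/-- Lower rectangular sum: S_l(h,N) = ∑_{i=1}^{N} h·p(y₀ + i·h). -/
noncomputable def lowerSum (p : ℝ → ℝ) (y₀ h : ℝ) (N : ℕ) : ℝ :=
  ∑ i ∈ Finset.Icc 1 N, h * p (y₀ + (i : ℝ) * h)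

/-- Trapezoidal sum: S_t(h,N) = ∑_{i=1}^{N} (h/2)·(p(y₀+(i−1)·h) + p(y₀+i·h)). -/
noncomputable def trapSum (p : ℝ → ℝ) (y₀ h : ℝ) (N : ℕ) : ℝ :=
  ∑ i ∈ Finset.Icc 1 N, (h / 2) * (p (y₀ + ((i : ℝ) - 1) * h) + p (y₀ + (i : ℝ) * h))

theorem Finset.sum_Icc_one_eq_sum_range {M : Type*} [AddCommMonoid M] (f : ℕ → M) (N : ℕ) :
    ∑ i ∈ Icc 1 N, f i = ∑ i ∈ range N, f (i + 1) := by
  rw [range_eq_Ico, sum_Ico_add' f, zero_add, Ico_add_one_right_eq_Icc]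

theorem integral_sub_mul_add_sub_mul (a b u v : ℝ) :
    ∫ x in a..b, ((b - x) * u + (x - a) * v) = (b - a) ^ 2 / 2 * (u + v) := by
  rw [intervalIntegral.integral_eq_sub_of_hasDerivAt
    (f := fun x => -((b - x) ^ 2 / 2 * u) + (x - a) ^ 2 / 2 * v)]
  · ring
  · intro x _
    refine (((((hasDerivAt_id x).const_sub b).pow 2).div_const 2).mul_const u).neg.add
      (((((hasDerivAt_id x).sub_const a).pow 2).div_const 2).mul_const v) |>.congr_deriv ?_
    simp only [id]
    ring
  · exact (by fun_prop : Continuous _).intervalIntegrable _ _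

theorem StrictAntiOn.mul_lt_integral {f : ℝ → ℝ} {a b : ℝ} (hab : a < b)
    (hc : ContinuousOn f (Icc a b)) (hf : StrictAntiOn f (Icc a b)) :
    (b - a) * f b < ∫ x in a..b, f x := by
  have ha : a ∈ Icc a b := left_mem_Icc.2 hab.le
  have hb : b ∈ Icc a b := right_mem_Icc.2 hab.le
  have key := intervalIntegral.integral_lt_integral_of_continuousOn_of_le_of_exists_lt hab
    continuousOn_const hc (fun x hx => hf.antitoneOn ⟨hx.1.le, hx.2⟩ hb hx.2)
    ⟨a, ha, hf ha hb hab⟩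
  simpa using key

theorem StrictConvexOn.integral_lt_trapezoid {f : ℝ → ℝ} {a b : ℝ} (hab : a < b)
    (hc : ContinuousOn f (Icc a b)) (hf : StrictConvexOn ℝ (Icc a b) f) :
    ∫ x in a..b, f x < (b - a) / 2 * (f a + f b) := by
  have ha : a ∈ Icc a b := left_mem_Icc.2 hab.le
  have hb : b ∈ Icc a b := right_mem_Icc.2 hab.le
  have below_chord : ∀ x ∈ Ioo a b, (b - a) * f x < (b - x) * f a + (x - a) * f b :=
    fun x hx => hf.secant_strict_mono_aux1 ha hb hx.1 hx.2
  have key : ∫ x in a..b, (b - a) * f x < ∫ x in a..b, ((b - x) * f a + (x - a) * f b) := by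
    refine intervalIntegral.integral_lt_integral_of_continuousOn_of_le_of_exists_lt hab
      (continuousOn_const.mul hc) (by fun_prop) (fun x hx => ?_)
      ⟨(a + b) / 2, ⟨by linarith, by linarith⟩, below_chord _ ⟨by linarith, by linarith⟩⟩
    rcases hx.2.eq_or_lt with rfl | hxb
    · exact le_of_eq (by ring)
    · exact (below_chord x ⟨hx.1, hxb⟩).le
  rw [intervalIntegral.integral_const_mul, integral_sub_mul_add_sub_mul,
    show (b - a) ^ 2 / 2 * (f a + f b) = (b - a) * ((b - a) / 2 * (f a + f b)) by ring] at key
  exact lt_of_mul_lt_mul_left key (sub_pos.2 hab).le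

section Grid

variable {p : ℝ → ℝ} {y₀ h : ℝ}

theorem Icc_grid_subset_Ici (hh : 0 ≤ h) (i : ℕ) :
    Icc (y₀ + i * h) (y₀ + (i + 1) * h) ⊆ Ici y₀ := fun _ hx =>
  le_trans (le_add_of_nonneg_right (by positivity)) hx.1

theorem sum_integral_grid (hc : ContinuousOn p (Ici y₀)) (hh : 0 ≤ h) (N : ℕ) :
    ∑ i ∈ range N, ∫ y in y₀ + i * h..y₀ + (i + 1) * h, p y = ∫ y in y₀..y₀ + N * h, p y := by
  have key := intervalIntegral.sum_integral_adjacent_intervals (a := fun i : ℕ => y₀ + i * h)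
    (μ := MeasureTheory.volume) (f := p) (n := N) fun i _ => by
      refine (hc.mono ?_).intervalIntegrable_of_Icc ?_
      · exact_mod_cast Icc_grid_subset_Ici hh i
      · push_cast; nlinarith
  push_cast at key
  simpa using key

theorem lowerSum_lt_integral (hc : ContinuousOn p (Ici y₀)) (hanti : StrictAntiOn p (Ici y₀))
    (hh : 0 < h) {N : ℕ} (hN : 0 < N) :
    lowerSum p y₀ h N < ∫ y in y₀..y₀ + N * h, p y := by
  rw [lowerSum, sum_Icc_one_eq_sum_range, ← sum_integral_grid hc hh.le]
  refine sum_lt_sum_of_nonempty (nonempty_range_iff.2 hN.ne') fun i _ => ?_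
  have hsub := Icc_grid_subset_Ici (y₀ := y₀) hh.le i
  have key := (hanti.mono hsub).mul_lt_integral (by linarith) (hc.mono hsub)
  rw [show y₀ + (i + 1) * h - (y₀ + i * h) = h by ring] at key
  exact_mod_cast key

theorem integral_lt_trapSum (hc : ContinuousOn p (Ici y₀))
    (hconv : StrictConvexOn ℝ (Ici y₀) p) (hh : 0 < h) {N : ℕ} (hN : 0 < N) :
    ∫ y in y₀..y₀ + N * h, p y < trapSum p y₀ h N := by
  rw [trapSum, sum_Icc_one_eq_sum_range, ← sum_integral_grid hc hh.le]
  refine sum_lt_sum_of_nonempty (nonempty_range_iff.2 hN.ne') fun i _ => ?_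
  have hsub := Icc_grid_subset_Ici (y₀ := y₀) hh.le i
  have key := (hconv.subset hsub (convex_Icc _ _)).integral_lt_trapezoid (by linarith)
    (hc.mono hsub)
  rw [show y₀ + (i + 1) * h - (y₀ + i * h) = h by ring] at key
  push_cast
  rwa [add_sub_cancel_right]

end Grid

theorem monotoneOn_integral_of_nonneg {p : ℝ → ℝ} {y₀ : ℝ} (hc : ContinuousOn p (Ici y₀))
    (hp : ∀ y ∈ Ici y₀, 0 ≤ p y) : MonotoneOn (fun X => ∫ y in y₀..X, p y) (Ici y₀) :=
  fun _ hX _ _ hXY => intervalIntegral.integral_mono_interval le_rfl hX hXY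
    ((MeasureTheory.ae_restrict_iff' measurableSet_Ioc).2
      (MeasureTheory.ae_of_all _ fun y hy => hp y hy.1.le))
    ((hc.mono Icc_subset_Ici_self).intervalIntegrable_of_Icc (le_trans hX hXY))

theorem stmt_2_general (y₀ b : ℝ) (p : ℝ → ℝ)
    (hc : ContinuousOn p (Set.Ici y₀))
    (hpos : ∀ y ∈ Set.Ici y₀, 0 < p y)
    (hanti : StrictAntiOn p (Set.Ici y₀))
    (hconv : StrictConvexOn ℝ (Set.Ici y₀) p)
    (Y : ℝ) (hY : y₀ ≤ Y) (hint : (∫ y in y₀..Y, p y) = b)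
    (h : ℝ) (hh : 0 < h) (n₁ n₂ : ℕ) (hn₁ : 1 ≤ n₁) (hlt : n₁ < n₂)
    (ht : trapSum p y₀ h n₁ ≤ b) (hl : b ≤ lowerSum p y₀ h n₂) :
    y₀ + h * (n₁ : ℝ) < Y ∧ Y < y₀ + h * (n₂ : ℝ) := by
  have hF := monotoneOn_integral_of_nonneg hc fun y hy => (hpos y hy).le
  have hgrid : ∀ n : ℕ, y₀ + h * n ∈ Ici y₀ := fun n =>
    le_add_of_nonneg_right (by positivity : (0 : ℝ) ≤ h * n)
  constructor
  · refine hF.reflect_lt (hgrid n₁) hY ?_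
    simp only [hint, mul_comm h]
    exact (integral_lt_trapSum hc hconv hh hn₁).trans_le ht
  · refine hF.reflect_lt hY (hgrid n₂) ?_
    simp only [hint, mul_comm h]
    exact hl.trans_lt (lowerSum_lt_integral hc hanti hh (by omega))

theorem stmt_2 (y₀ b : ℝ) (hb : 0 < b) (p : ℝ → ℝ)
    (hc : ContinuousOn p (Set.Ici y₀))
    (hpos : ∀ y ∈ Set.Ici y₀, 0 < p y)
    (hanti : StrictAntiOn p (Set.Ici y₀))
    (hconv : StrictConvexOn ℝ (Set.Ici y₀) p)
    (Y : ℝ) (hY : y₀ ≤ Y) (hint : (∫ y in y₀..Y, p y) = b)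
    (h : ℝ) (hh : 0 < h) (n₁ n₂ : ℕ) (hn₁ : 1 ≤ n₁) (hlt : n₁ < n₂)
    (ht : trapSum p y₀ h n₁ ≤ b) (hl : b ≤ lowerSum p y₀ h n₂) :
    y₀ + h * (n₁ : ℝ) < Y ∧ Y < y₀ + h * (n₂ : ℝ) :=
  stmt_2_general y₀ b p hc hpos hanti hconv Y hY hint h hh n₁ n₂ hn₁ hlt ht hl
end

section
/- Let y₀ ∈ ℝ, b > 0, h > 0, j ≥ 1 a natural number, and let p : ℝ → ℝ be decreasing and strictly positive on [y₀, ∞). Suppose there exists N with S_l(h,N) ≥ b, and let n₂(h) denote the least such N; likewise suppose the least N with S_l(h/j, N) ≥ b exists and denote it n₂(h/j). Then n₂(h/j) ≤ j·n₂(h). -/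
open Set Finset

theorem stmt_6 (y₀ b h : ℝ) (hb : 0 < b) (hh : 0 < h) (j : ℕ) (hj : 1 ≤ j)
    (p : ℝ → ℝ)
    (hanti : AntitoneOn p (Set.Ici y₀))
    (hpos : ∀ y ∈ Set.Ici y₀, 0 < p y)
    (n₂h n₂hj : ℕ)
    (hleast : IsLeast {N : ℕ | b ≤ lowerSum p y₀ h N} n₂h)
    (hleast' : IsLeast {N : ℕ | b ≤ lowerSum p y₀ (h / (j : ℝ)) N} n₂hj) :
    n₂hj ≤ j * n₂h := by
  have hjR : (0:ℝ) < (j:ℝ) := by exact_mod_cast hj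
  have hhj : 0 < h / (j:ℝ) := div_pos hh hjR
  have key : ∀ N : ℕ, lowerSum p y₀ h N ≤ lowerSum p y₀ (h / (j:ℝ)) (j * N) := by
    intro N
    induction N with
    | zero => simp [lowerSum]
    | succ N ih =>
      have hm : j * N ≤ j * (N + 1) := Nat.mul_le_mul_left j (Nat.le_succ N)
      have split : lowerSum p y₀ (h / (j:ℝ)) (j * (N + 1)) =
          lowerSum p y₀ (h / (j:ℝ)) (j * N) +
          ∑ k ∈ Finset.Ioc (j * N) (j * (N + 1)),
            (h / (j:ℝ)) * p (y₀ + (k : ℝ) * (h / (j:ℝ))) := by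
        simp only [lowerSum, Finset.Icc_add_one_left_eq_Ioc, Nat.succ_eq_add_one, Nat.zero_add]
        exact (Finset.sum_Ioc_consecutive (fun k : ℕ => (h / (j:ℝ)) * p (y₀ + (k : ℝ) * (h / (j:ℝ)))) (Nat.zero_le _) hm).symm
      have split2 : lowerSum p y₀ h (N + 1) =
          lowerSum p y₀ h N + h * p (y₀ + ((N:ℝ) + 1) * h) := by
        simp only [lowerSum]
        rw [Finset.sum_Icc_succ_top (Nat.one_le_iff_ne_zero.mpr (Nat.succ_ne_zero N))]
        push_cast
        ring
      rw [split, split2]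
      have block : h * p (y₀ + ((N:ℝ) + 1) * h) ≤
          ∑ k ∈ Finset.Ioc (j * N) (j * (N + 1)),
            (h / (j:ℝ)) * p (y₀ + (k : ℝ) * (h / (j:ℝ))) := by
        have hterm : ∀ k ∈ Finset.Ioc (j * N) (j * (N + 1)),
            (h / (j:ℝ)) * p (y₀ + ((N:ℝ) + 1) * h) ≤
            (h / (j:ℝ)) * p (y₀ + (k : ℝ) * (h / (j:ℝ))) := by
          intro k hk
          rw [Finset.mem_Ioc] at hk
          have hk1 : 1 ≤ k := Nat.one_le_iff_ne_zero.mpr (by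
            rintro rfl; exact Nat.not_lt_zero _ hk.1)
          have hmem1 : y₀ + (k : ℝ) * (h / (j:ℝ)) ∈ Set.Ici y₀ := by
            have : (0:ℝ) ≤ (k:ℝ) * (h / (j:ℝ)) :=
              mul_nonneg (Nat.cast_nonneg k) hhj.le
            simp [Set.mem_Ici]; linarith
          have hmem2 : y₀ + ((N:ℝ) + 1) * h ∈ Set.Ici y₀ := by
            have : (0:ℝ) ≤ ((N:ℝ) + 1) * h := by positivity
            simp [Set.mem_Ici]; linarith
          have harg : (k : ℝ) * (h / (j:ℝ)) ≤ ((N:ℝ) + 1) * h := by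
            have hkc : (k:ℝ) ≤ (j:ℝ) * ((N:ℝ) + 1) := by
              have := hk.2
              push_cast
              exact_mod_cast (by push_cast at this ⊢; exact_mod_cast this : (k:ℝ) ≤ ((j * (N+1) : ℕ) : ℝ))
            rw [div_eq_mul_inv]
            calc (k:ℝ) * (h * (j:ℝ)⁻¹) = (k:ℝ) * (j:ℝ)⁻¹ * h := by ring
            _ ≤ ((N:ℝ) + 1) * h := by
                apply mul_le_mul_of_nonneg_right _ hh.le
                rw [mul_inv_le_iff₀ hjR]
                linarith [hkc]
          exact mul_le_mul_of_nonneg_left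
            (hanti hmem1 hmem2 (by linarith)) hhj.le
        calc h * p (y₀ + ((N:ℝ) + 1) * h)
            = ∑ _k ∈ Finset.Ioc (j * N) (j * (N + 1)),
                (h / (j:ℝ)) * p (y₀ + ((N:ℝ) + 1) * h) := by
              rw [Finset.sum_const, Nat.card_Ioc]
              have : j * (N + 1) - j * N = j := by
                rw [Nat.mul_succ]; omega
              rw [this]
              rw [nsmul_eq_mul]
              field_simp
          _ ≤ _ := Finset.sum_le_sum hterm
      linarith
  exact hleast'.2 (le_trans hleast.1 (key n₂h))
end

section
/- (Lemma 1) Let y₀ ∈ ℝ, b > 0, h > 0, j ≥ 1 a natural number, and let p : ℝ → ℝ be decreasing and strictly positive on [y₀, ∞). Suppose the least N with S_l(h,N) ≥ b exists and equals n₂(h), and the least N with S_l(h/j,N) ≥ b exists and equals n₂(h/j). Then (h/j)·n₂(h/j) ≤ h·n₂(h). -/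
open Set Finset

lemma lowerSum_refine (y₀ h : ℝ) (hh : 0 < h) (j : ℕ) (hj : 1 ≤ j)
    (p : ℝ → ℝ) (hanti : AntitoneOn p (Set.Ici y₀)) (N : ℕ) :
    lowerSum p y₀ h N ≤ lowerSum p y₀ (h / (j : ℝ)) (j * N) := by
  have hj0 : (0:ℝ) < (j : ℝ) := by exact_mod_cast hj
  induction N with
  | zero => simp [lowerSum]
  | succ N ih =>
    have hS : lowerSum p y₀ h (N + 1)
        = lowerSum p y₀ h N + h * p (y₀ + ((N:ℝ) + 1) * h) := by
      unfold lowerSum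
      rw [Finset.sum_Icc_succ_top (Nat.one_le_iff_ne_zero.2 (Nat.succ_ne_zero N))]
      push_cast
      rfl
    have hsplit : lowerSum p y₀ (h / (j : ℝ)) (j * (N + 1))
        = lowerSum p y₀ (h / (j : ℝ)) (j * N)
          + ∑ i ∈ Finset.Ioc (j * N) (j * N + j),
              (h / (j : ℝ)) * p (y₀ + (i : ℝ) * (h / (j : ℝ))) := by
      unfold lowerSum
      have h1 : ∀ M : ℕ, Finset.Icc 1 M = Finset.Ioc 0 M := by
        intro M; ext x; simp [Nat.lt_iff_add_one_le]
      rw [h1, h1, Nat.mul_succ,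
        ← Finset.sum_Ioc_consecutive _ (Nat.zero_le (j * N)) (Nat.le_add_right _ j)]
    have htail : h * p (y₀ + ((N:ℝ) + 1) * h)
        ≤ ∑ i ∈ Finset.Ioc (j * N) (j * N + j),
            (h / (j : ℝ)) * p (y₀ + (i : ℝ) * (h / (j : ℝ))) := by
      have hbnd : ∀ i ∈ Finset.Ioc (j * N) (j * N + j),
          (h / (j : ℝ)) * p (y₀ + ((N:ℝ) + 1) * h)
            ≤ (h / (j : ℝ)) * p (y₀ + (i : ℝ) * (h / (j : ℝ))) := by
        intro i hi
        simp only [Finset.mem_Ioc] at hi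
        have hi1 : 1 ≤ i := le_trans (Nat.succ_le_succ (Nat.zero_le _)) hi.1
        have hmem1 : y₀ + (i : ℝ) * (h / (j : ℝ)) ∈ Set.Ici y₀ := by
          have : 0 ≤ (i : ℝ) * (h / (j : ℝ)) := by positivity
          simp [Set.mem_Ici]; linarith
        have hmem2 : y₀ + ((N:ℝ) + 1) * h ∈ Set.Ici y₀ := by
          have : 0 ≤ ((N:ℝ) + 1) * h := by positivity
          simp [Set.mem_Ici]; linarith
        have harg : y₀ + (i : ℝ) * (h / (j : ℝ)) ≤ y₀ + ((N:ℝ) + 1) * h := by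
          have hile : (i : ℝ) ≤ (j : ℝ) * ((N:ℝ) + 1) := by
            calc (i:ℝ) ≤ ((j * N + j : ℕ) : ℝ) := by exact_mod_cast hi.2
              _ = (j:ℝ) * ((N:ℝ) + 1) := by push_cast; ring
          have : (i : ℝ) * (h / (j : ℝ)) ≤ (j : ℝ) * ((N:ℝ) + 1) * (h / (j : ℝ)) := by
            apply mul_le_mul_of_nonneg_right hile (by positivity)
          calc y₀ + (i : ℝ) * (h / (j : ℝ)) ≤ y₀ + (j : ℝ) * ((N:ℝ) + 1) * (h / (j : ℝ)) := by linarith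
            _ = y₀ + ((N:ℝ) + 1) * h := by field_simp
        exact mul_le_mul_of_nonneg_left (hanti hmem1 hmem2 harg) (by positivity)
      calc h * p (y₀ + ((N:ℝ) + 1) * h)
          = (Finset.Ioc (j * N) (j * N + j)).card
            • ((h / (j : ℝ)) * p (y₀ + ((N:ℝ) + 1) * h)) := by
            rw [Nat.card_Ioc]
            simp [nsmul_eq_mul]
            field_simp
        _ = ∑ _i ∈ Finset.Ioc (j * N) (j * N + j),
              (h / (j : ℝ)) * p (y₀ + ((N:ℝ) + 1) * h) := by
            rw [Finset.sum_const]
        _ ≤ _ := Finset.sum_le_sum hbnd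
    rw [hS, hsplit]
    linarith

theorem stmt_7 (y₀ b h : ℝ) (hb : 0 < b) (hh : 0 < h) (j : ℕ) (hj : 1 ≤ j)
    (p : ℝ → ℝ)
    (hanti : AntitoneOn p (Set.Ici y₀))
    (hpos : ∀ y ∈ Set.Ici y₀, 0 < p y)
    (n₂h n₂hj : ℕ)
    (hleast : IsLeast {N : ℕ | b ≤ lowerSum p y₀ h N} n₂h)
    (hleast' : IsLeast {N : ℕ | b ≤ lowerSum p y₀ (h / (j : ℝ)) N} n₂hj) :
    (h / (j : ℝ)) * (n₂hj : ℝ) ≤ h * (n₂h : ℝ) := by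
  have hj0 : (0:ℝ) < (j : ℝ) := by exact_mod_cast hj
  have hmem : b ≤ lowerSum p y₀ (h / (j : ℝ)) (j * n₂h) :=
    le_trans hleast.1 (lowerSum_refine y₀ h hh j hj p hanti n₂h)
  have hle : n₂hj ≤ j * n₂h := hleast'.2 hmem
  have : (h / (j : ℝ)) * (n₂hj : ℝ) ≤ (h / (j : ℝ)) * ((j : ℝ) * (n₂h : ℝ)) := by
    apply mul_le_mul_of_nonneg_left _ (by positivity)
    exact_mod_cast Nat.cast_le.2 hle |>.trans_eq (by push_cast; ring)
  calc (h / (j : ℝ)) * (n₂hj : ℝ) ≤ (h / (j : ℝ)) * ((j : ℝ) * (n₂h : ℝ)) := this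
    _ = h * (n₂h : ℝ) := by field_simp
end

section
/- Let y₀ ∈ ℝ, h > 0, and let p : ℝ → ℝ be convex on [y₀, ∞). Then for all natural numbers N and j ≥ 1, the refined trapezoidal sum is dominated by the coarse one: S_t(h/j, j·N) ≤ S_t(h, N). -/
open Set Finset

lemma gauss_sum (j : ℕ) : ∑ k ∈ Finset.Icc 1 j, (k : ℝ) = j * (j + 1) / 2 := by
  induction j with
  | zero => simp
  | succ n ih =>
    rw [Finset.sum_Icc_succ_top (Nat.le_add_left 1 n), ih]
    push_cast; ring

lemma trapSum_succ (p : ℝ → ℝ) (y₀ h : ℝ) (N : ℕ) :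
    trapSum p y₀ h (N + 1) =
      trapSum p y₀ h N + (h / 2) * (p (y₀ + (N : ℝ) * h) + p (y₀ + ((N : ℝ) + 1) * h)) := by
  unfold trapSum
  rw [Finset.sum_Icc_succ_top (Nat.le_add_left 1 N)]
  simp only [Nat.cast_add, Nat.cast_one, add_sub_cancel_right]

lemma trapSum_split (p : ℝ → ℝ) (y₀ h : ℝ) (m n : ℕ) :
    trapSum p y₀ h (m + n) = trapSum p y₀ h m + trapSum p (y₀ + (m : ℝ) * h) h n := by
  induction n with
  | zero => simp [trapSum]
  | succ n ih =>
    rw [show m + (n + 1) = (m + n) + 1 from rfl, trapSum_succ, ih, trapSum_succ]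
    push_cast
    ring_nf

lemma chord_bound (y₀ : ℝ) (p : ℝ → ℝ) (hconv : ConvexOn ℝ (Set.Ici y₀) p)
    (a h : ℝ) (ha : y₀ ≤ a) (hh : 0 ≤ h) (t : ℝ) (ht0 : 0 ≤ t) (ht1 : t ≤ 1) :
    p (a + t * h) ≤ (1 - t) * p a + t * p (a + h) := by
  have h1 : a ∈ Set.Ici y₀ := ha
  have h2 : a + h ∈ Set.Ici y₀ := le_add_of_le_of_nonneg ha hh
  have := hconv.2 h1 h2 (by linarith : (0:ℝ) ≤ 1 - t) ht0 (by ring)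
  simpa [smul_eq_mul, show (1 - t) * a + t * (a + h) = a + t * h from by ring] using this

lemma block_bound (y₀ : ℝ) (p : ℝ → ℝ) (hconv : ConvexOn ℝ (Set.Ici y₀) p)
    (a h : ℝ) (ha : y₀ ≤ a) (hh : 0 < h) (j : ℕ) (hj : 1 ≤ j) :
    trapSum p a (h / (j : ℝ)) j ≤ (h / 2) * (p a + p (a + h)) := by
  have hjR : (0:ℝ) < (j : ℝ) := by exact_mod_cast Nat.pos_of_ne_zero (by omega)
  have hjne : (j : ℝ) ≠ 0 := ne_of_gt hjR
  set A := p a with hA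
  set B := p (a + h) with hB
  have hsum : trapSum p a (h / (j : ℝ)) j ≤
      ∑ k ∈ Finset.Icc 1 j, (h / (2 * j)) *
        ((1 - ((k : ℝ) - 1) / j) * A + (((k : ℝ) - 1) / j) * B
          + ((1 - (k : ℝ) / j) * A + ((k : ℝ) / j) * B)) := by
    unfold trapSum
    apply Finset.sum_le_sum
    intro k hk
    rw [Finset.mem_Icc] at hk
    have hk1 : 1 ≤ k := hk.1
    have hkj : k ≤ j := hk.2
    have hkR1 : (1:ℝ) ≤ (k:ℝ) := by exact_mod_cast hk1
    have hkRj : (k:ℝ) ≤ (j:ℝ) := by exact_mod_cast hkj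
    have hb1 : p (a + (((k : ℝ) - 1) / j) * h) ≤
        (1 - ((k : ℝ) - 1) / j) * A + (((k : ℝ) - 1) / j) * B := by
      apply chord_bound y₀ p hconv a h ha hh.le
      · exact div_nonneg (by linarith) hjR.le
      · rw [div_le_one hjR]; linarith
    have hb2 : p (a + ((k : ℝ) / j) * h) ≤
        (1 - (k : ℝ) / j) * A + ((k : ℝ) / j) * B := by
      apply chord_bound y₀ p hconv a h ha hh.le
      · positivity
      · rw [div_le_one hjR]; linarith
    have e1 : a + ((k : ℝ) - 1) * (h / j) = a + (((k : ℝ) - 1) / j) * h := by ring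
    have e2 : a + (k : ℝ) * (h / j) = a + ((k : ℝ) / j) * h := by ring
    rw [e1, e2]
    have hcoef : h / (j : ℝ) / 2 = h / (2 * j) := by ring
    rw [hcoef]
    have hpos : (0:ℝ) ≤ h / (2 * j) := by positivity
    nlinarith [hb1, hb2, mul_le_mul_of_nonneg_left (add_le_add hb1 hb2) hpos]
  refine hsum.trans_eq ?_
  have hform : ∀ k ∈ Finset.Icc 1 j, (h / (2 * j)) *
        ((1 - ((k : ℝ) - 1) / j) * A + (((k : ℝ) - 1) / j) * B
          + ((1 - (k : ℝ) / j) * A + ((k : ℝ) / j) * B)) =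
      (h / (2 * j)) * ((2 + 1 / j) * A - (1 / j) * B)
        + ((h / (2 * j)) * (2 / j) * (B - A)) * (k : ℝ) := by
    intro k _
    field_simp
    ring
  rw [Finset.sum_congr rfl hform, Finset.sum_add_distrib, Finset.sum_const,
    ← Finset.mul_sum, gauss_sum, Nat.card_Icc]
  simp only [Nat.add_sub_cancel, nsmul_eq_mul]
  field_simp
  ring

theorem stmt_8 (y₀ h : ℝ) (hh : 0 < h) (p : ℝ → ℝ)
    (hconv : ConvexOn ℝ (Set.Ici y₀) p)
    (N j : ℕ) (hj : 1 ≤ j) :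
    trapSum p y₀ (h / (j : ℝ)) (j * N) ≤ trapSum p y₀ h N := by
  have hjR : (0:ℝ) < (j : ℝ) := by exact_mod_cast Nat.pos_of_ne_zero (by omega)
  have hjne : (j : ℝ) ≠ 0 := ne_of_gt hjR
  induction N with
  | zero => simp [trapSum]
  | succ N ih =>
    have hsplit : trapSum p y₀ (h / (j : ℝ)) (j * (N + 1)) =
        trapSum p y₀ (h / (j : ℝ)) (j * N)
          + trapSum p (y₀ + (N : ℝ) * h) (h / (j : ℝ)) j := by
      rw [show j * (N + 1) = j * N + j from by ring, trapSum_split]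
      congr 2
      push_cast
      field_simp
    rw [hsplit, trapSum_succ]
    exact add_le_add ih (by
      have := block_bound y₀ p hconv (y₀ + (N : ℝ) * h) h
        (by nlinarith [Nat.cast_nonneg (α := ℝ) N] : y₀ ≤ y₀ + (N : ℝ) * h) hh j hj
      simpa [show y₀ + (N : ℝ) * h + h = y₀ + ((N : ℝ) + 1) * h from by ring] using this)
end

section
/- (Lemma 2, second part) Let y₀ ∈ ℝ, b > 0, h > 0, j ≥ 1 a natural number, and let p : ℝ → ℝ be strictly positive and convex on [y₀, ∞). Suppose the largest natural number N with S_t(h,N) ≤ b exists and equals n₃(h), and the largest N with S_t(h/j,N) ≤ b exists and equals n₃(h/j). Then n₃(h/j) ≥ j·n₃(h), and hence (h/j)·n₃(h/j) ≥ h·n₃(h). -/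
open Set Finset

lemma sumOdd (j : ℕ) : ∑ k ∈ Finset.range j, ((2:ℝ) * k + 1) = (j:ℝ)^2 := by
  induction j with
  | zero => simp
  | succ n ih => rw [Finset.sum_range_succ, ih]; push_cast; ring

lemma trapSum_eq_range (p : ℝ → ℝ) (y₀ h : ℝ) (N : ℕ) :
    trapSum p y₀ h N
      = ∑ i ∈ Finset.range N, (h / 2) * (p (y₀ + (i : ℝ) * h) + p (y₀ + ((i : ℝ) + 1) * h)) := by
  rw [trapSum, show Finset.Icc 1 N = Finset.Ico 1 (N+1) from (Finset.Ico_add_one_right_eq_Icc 1 N).symm,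
    Finset.sum_Ico_eq_sum_range]
  simp only [Nat.add_sub_cancel]
  refine Finset.sum_congr rfl fun i _ => ?_
  have h1 : ((1 + i : ℕ) : ℝ) - 1 = (i : ℝ) := by push_cast; ring
  have h2 : ((1 + i : ℕ) : ℝ) = (i : ℝ) + 1 := by push_cast; ring
  rw [h1, h2]

lemma block (p : ℝ → ℝ) (y₀ h : ℝ) (hh : 0 < h) (j : ℕ) (hj : 1 ≤ j)
    (hconv : ConvexOn ℝ (Set.Ici y₀) p) (a : ℝ) (ha : y₀ ≤ a) :
    ∑ k ∈ Finset.range j, ((h / j) / 2) * (p (a + (k : ℝ) * (h / j)) + p (a + ((k : ℝ) + 1) * (h / j)))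
      ≤ (h / 2) * (p a + p (a + h)) := by
  have hj0 : (0:ℝ) < (j:ℝ) := by exact_mod_cast hj
  have hj0' : (j:ℝ) ≠ 0 := ne_of_gt hj0
  have hah : a + h ∈ Set.Ici y₀ := by simp only [Set.mem_Ici]; linarith
  have ha' : a ∈ Set.Ici y₀ := ha
  have key : ∀ t : ℝ, 0 ≤ t → t ≤ 1 → p (a + t * h) ≤ (1 - t) * p a + t * p (a + h) := by
    intro t ht ht1
    have := hconv.2 ha' hah (by linarith : (0:ℝ) ≤ 1 - t) ht (by ring)
    have e : (1 - t) • a + t • (a + h) = a + t * h := by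
      simp only [smul_eq_mul]; ring
    rwa [e] at this
  have hcoef : (0:ℝ) ≤ (h / j) / 2 := by positivity
  have bound : ∀ k ∈ Finset.range j,
      ((h / j) / 2) * (p (a + (k : ℝ) * (h / j)) + p (a + ((k : ℝ) + 1) * (h / j)))
        ≤ ((h / j) / 2) * (((1 - (k:ℝ)/j) * p a + ((k:ℝ)/j) * p (a + h))
            + ((1 - ((k:ℝ)+1)/j) * p a + (((k:ℝ)+1)/j) * p (a + h))) := by
    intro k hk
    have hk' : (k:ℝ) < (j:ℝ) := by exact_mod_cast Finset.mem_range.mp hk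
    have e1 : (k:ℝ) * (h / j) = ((k:ℝ)/j) * h := by field_simp
    have e2 : ((k:ℝ) + 1) * (h / j) = (((k:ℝ)+1)/j) * h := by field_simp
    rw [e1, e2]
    apply mul_le_mul_of_nonneg_left _ hcoef
    have b1 := key ((k:ℝ)/j) (by positivity) (by rw [div_le_one hj0]; linarith)
    have b2 := key (((k:ℝ)+1)/j) (by positivity) (by
      rw [div_le_one hj0]
      have : (k:ℕ)+1 ≤ j := Finset.mem_range.mp hk
      exact_mod_cast this)
    linarith
  calc ∑ k ∈ Finset.range j, ((h / j) / 2) * (p (a + (k : ℝ) * (h / j)) + p (a + ((k : ℝ) + 1) * (h / j)))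
      ≤ ∑ k ∈ Finset.range j, ((h / j) / 2) * (((1 - (k:ℝ)/j) * p a + ((k:ℝ)/j) * p (a + h))
            + ((1 - ((k:ℝ)+1)/j) * p a + (((k:ℝ)+1)/j) * p (a + h))) :=
        Finset.sum_le_sum bound
    _ = ∑ k ∈ Finset.range j, ((h / j) * p a
          + (((h/2) / (j:ℝ)^2) * (p (a + h) - p a)) * ((2:ℝ) * k + 1)) := by
        refine Finset.sum_congr rfl fun k _ => ?_
        field_simp
        ring
    _ = (h / 2) * (p a + p (a + h)) := by
        rw [Finset.sum_add_distrib, Finset.sum_const, ← Finset.mul_sum, sumOdd,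
          Finset.card_range, nsmul_eq_mul]
        field_simp
        ring

lemma chain (p : ℝ → ℝ) (y₀ h : ℝ) (hh : 0 < h) (j : ℕ) (hj : 1 ≤ j)
    (hconv : ConvexOn ℝ (Set.Ici y₀) p) (N : ℕ) :
    trapSum p y₀ (h / j) (j * N) ≤ trapSum p y₀ h N := by
  have hj0 : (0:ℝ) < (j:ℝ) := by exact_mod_cast hj
  have hj0' : (j:ℝ) ≠ 0 := ne_of_gt hj0
  rw [trapSum_eq_range, trapSum_eq_range]
  induction N with
  | zero => simp
  | succ n ih =>
    rw [Nat.mul_succ, Finset.sum_range_add, Finset.sum_range_succ]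
    refine add_le_add ih ?_
    have := block p y₀ h hh j hj hconv (y₀ + (n:ℝ) * h) (by have := mul_nonneg (Nat.cast_nonneg (α:=ℝ) n) hh.le; linarith : y₀ ≤ y₀ + (n:ℝ) * h)
    calc ∑ k ∈ Finset.range j, (h / ↑j / 2) *
          (p (y₀ + ((j * n + k : ℕ) : ℝ) * (h / ↑j)) + p (y₀ + (((j * n + k : ℕ) : ℝ) + 1) * (h / ↑j)))
        = ∑ k ∈ Finset.range j, ((h / j) / 2) *
          (p ((y₀ + (n:ℝ) * h) + (k : ℝ) * (h / j)) + p ((y₀ + (n:ℝ) * h) + ((k : ℝ) + 1) * (h / j))) := by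
          refine Finset.sum_congr rfl fun k _ => ?_
          have e1 : y₀ + ((j * n + k : ℕ) : ℝ) * (h / ↑j) = (y₀ + (n:ℝ) * h) + (k : ℝ) * (h / j) := by
            push_cast; field_simp; ring
          have e2 : y₀ + (((j * n + k : ℕ) : ℝ) + 1) * (h / ↑j)
              = (y₀ + (n:ℝ) * h) + ((k : ℝ) + 1) * (h / j) := by
            push_cast; field_simp; ring
          rw [e1, e2]
      _ ≤ (h / 2) * (p (y₀ + (n:ℝ) * h) + p ((y₀ + (n:ℝ) * h) + h)) := this
      _ = (h / 2) * (p (y₀ + (n:ℝ) * h) + p (y₀ + ((n:ℝ) + 1) * h)) := by ring_nf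

theorem stmt_10 (y₀ b h : ℝ) (hb : 0 < b) (hh : 0 < h) (j : ℕ) (hj : 1 ≤ j)
    (p : ℝ → ℝ)
    (hpos : ∀ y ∈ Set.Ici y₀, 0 < p y)
    (hconv : ConvexOn ℝ (Set.Ici y₀) p)
    (n₃h n₃hj : ℕ)
    (hgr : IsGreatest {N : ℕ | trapSum p y₀ h N ≤ b} n₃h)
    (hgr' : IsGreatest {N : ℕ | trapSum p y₀ (h / (j : ℝ)) N ≤ b} n₃hj) :
    j * n₃h ≤ n₃hj ∧ h * (n₃h : ℝ) ≤ (h / (j : ℝ)) * (n₃hj : ℝ) := by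
  have hj0 : (0:ℝ) < (j:ℝ) := by exact_mod_cast hj
  have hmem : trapSum p y₀ (h / (j:ℝ)) (j * n₃h) ≤ b :=
    le_trans (chain p y₀ h hh j hj hconv n₃h) hgr.1
  have h1 : j * n₃h ≤ n₃hj := hgr'.2 hmem
  refine ⟨h1, ?_⟩
  have h2 : ((j * n₃h : ℕ) : ℝ) ≤ (n₃hj : ℝ) := by exact_mod_cast h1
  have h3 : (h / (j:ℝ)) * ((j * n₃h : ℕ) : ℝ) ≤ (h / (j:ℝ)) * (n₃hj : ℝ) :=
    mul_le_mul_of_nonneg_left h2 (le_of_lt (by positivity))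
  calc h * (n₃h : ℝ) = (h / (j:ℝ)) * ((j * n₃h : ℕ) : ℝ) := by
        push_cast; field_simp
    _ ≤ (h / (j:ℝ)) * (n₃hj : ℝ) := h3
end

section
/- (Intermediate bound in the proof of Theorem 1) Let y₀ ∈ ℝ, b > 0, ε > 0, and let p : ℝ → ℝ be strictly decreasing and strictly positive on [y₀, ∞). Suppose the least natural number N with S_l(ε,N) ≥ b exists and equals n₂¹, and for an integer j ≥ 2 the least N with S_l(ε/j,N) ≥ b exists, equals n₂, and satisfies n₂ > j. Then S_t(ε/j, n₂ − j) < b + (ε/(2j))·(p(y₀) − p(y₀ + ε·n₂¹ − ε)) − p(y₀ + ε·n₂¹)·(j−1)·(ε/j). -/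
open Set Finset

lemma trap_eq (p : ℝ → ℝ) (y₀ h : ℝ) (N : ℕ) :
    trapSum p y₀ h N = lowerSum p y₀ h N + h / 2 * (p y₀ - p (y₀ + (N : ℝ) * h)) := by
  induction N with
  | zero => simp [trapSum, lowerSum]
  | succ n ih =>
    rw [trapSum, lowerSum, Finset.sum_Icc_succ_top (by omega : 1 ≤ n + 1),
      Finset.sum_Icc_succ_top (by omega : 1 ≤ n + 1), ← trapSum, ← lowerSum, ih]
    have e : y₀ + (((n + 1 : ℕ) : ℝ) - 1) * h = y₀ + (n : ℝ) * h := by push_cast; ring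
    rw [e]
    push_cast
    ring

lemma lower_split (p : ℝ → ℝ) (y₀ h : ℝ) {N M : ℕ} (hNM : N ≤ M) :
    lowerSum p y₀ h M = lowerSum p y₀ h N + ∑ i ∈ Finset.Ioc N M, h * p (y₀ + (i : ℝ) * h) := by
  unfold lowerSum
  have e : ∀ K : ℕ, Finset.Icc 1 K = Finset.Ioc 0 K := by
    intro K; ext x; simp [Nat.lt_iff_add_one_le]
  rw [e, e, Finset.sum_Ioc_consecutive _ (Nat.zero_le N) hNM]

theorem stmt_11 (y₀ b ε : ℝ) (hb : 0 < b) (hε : 0 < ε)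
    (p : ℝ → ℝ)
    (hanti : StrictAntiOn p (Set.Ici y₀))
    (hpos : ∀ y ∈ Set.Ici y₀, 0 < p y)
    (n₂₁ : ℕ) (h₁ : IsLeast {N : ℕ | b ≤ lowerSum p y₀ ε N} n₂₁)
    (j : ℕ) (hj : 2 ≤ j)
    (n₂ : ℕ) (h₂ : IsLeast {N : ℕ | b ≤ lowerSum p y₀ (ε / (j : ℝ)) N} n₂)
    (hn₂ : j < n₂) :
    trapSum p y₀ (ε / (j : ℝ)) (n₂ - j) <
      b + (ε / (2 * (j : ℝ))) * (p y₀ - p (y₀ + ε * (n₂₁ : ℝ) - ε))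
        - p (y₀ + ε * (n₂₁ : ℝ)) * ((j : ℝ) - 1) * (ε / (j : ℝ)) := by
  have hj0 : (0 : ℝ) < (j : ℝ) := by positivity
  set h : ℝ := ε / (j : ℝ) with hh_def
  have hh : 0 < h := by positivity
  have hmono : ∀ a b' : ℝ, y₀ ≤ a → a ≤ b' → p b' ≤ p a := by
    intro a b' ha hab
    rcases eq_or_lt_of_le hab with rfl | hlt
    · exact le_refl _
    · exact (hanti ha (ha.trans hab) hlt).le
  have hn₂₁ : 1 ≤ n₂₁ := by
    by_contra hc
    push_neg at hc
    interval_cases n₂₁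
    have := h₁.1
    simp [lowerSum] at this
    linarith
  -- refinement: lowerSum ε N ≤ lowerSum h (j*N)
  have hrefine : ∀ N : ℕ, lowerSum p y₀ ε N ≤ lowerSum p y₀ h (j * N) := by
    intro N
    induction N with
    | zero => simp [lowerSum]
    | succ n ih =>
      have h1 : lowerSum p y₀ h (j * (n + 1)) = lowerSum p y₀ h (j * n) +
          ∑ i ∈ Finset.Ioc (j * n) (j * (n + 1)), h * p (y₀ + (i : ℝ) * h) :=
        lower_split p y₀ h (Nat.mul_le_mul le_rfl (by omega))
      have h2 : lowerSum p y₀ ε (n + 1) = lowerSum p y₀ ε n + ε * p (y₀ + ((n : ℝ) + 1) * ε) := by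
        rw [lowerSum, Finset.sum_Icc_succ_top (by omega : 1 ≤ n + 1), ← lowerSum]
        push_cast
        ring
      have htail : ε * p (y₀ + ((n : ℝ) + 1) * ε) ≤
          ∑ i ∈ Finset.Ioc (j * n) (j * (n + 1)), h * p (y₀ + (i : ℝ) * h) := by
        have hcard : (Finset.Ioc (j * n) (j * (n + 1))).card = j := by
          rw [Nat.card_Ioc]
          have : j * n ≤ j * (n + 1) := Nat.mul_le_mul le_rfl (by omega)
          have e : j * (n + 1) = j * n + j := by ring
          omega
        have hbound : ∀ i ∈ Finset.Ioc (j * n) (j * (n + 1)),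
            h * p (y₀ + ((n : ℝ) + 1) * ε) ≤ h * p (y₀ + (i : ℝ) * h) := by
          intro i hi
          rw [Finset.mem_Ioc] at hi
          have hiR : (i : ℝ) ≤ (j : ℝ) * ((n : ℝ) + 1) := by
            have : (i : ℝ) ≤ ((j * (n + 1) : ℕ) : ℝ) := Nat.cast_le.mpr hi.2
            push_cast at this
            linarith
          have harg : y₀ + (i : ℝ) * h ≤ y₀ + ((n : ℝ) + 1) * ε := by
            have : (i : ℝ) * h ≤ ((n : ℝ) + 1) * ε := by
              rw [hh_def, div_eq_mul_inv]
              have e : (i : ℝ) * (ε * (j : ℝ)⁻¹) = (i : ℝ) / (j : ℝ) * ε := by ring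
              rw [e]
              apply mul_le_mul_of_nonneg_right _ hε.le
              rw [div_le_iff₀ hj0]
              nlinarith
            linarith
          have hmem : y₀ ≤ y₀ + (i : ℝ) * h := le_add_of_nonneg_right (by positivity)
          exact mul_le_mul_of_nonneg_left (hmono _ _ hmem harg) hh.le
        calc ε * p (y₀ + ((n : ℝ) + 1) * ε)
            = ∑ _i ∈ Finset.Ioc (j * n) (j * (n + 1)), h * p (y₀ + ((n : ℝ) + 1) * ε) := by
              rw [Finset.sum_const, hcard, nsmul_eq_mul, hh_def]
              field_simp
          _ ≤ _ := Finset.sum_le_sum hbound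
      rw [h1, h2]
      linarith
  -- n₂ ≤ j * n₂₁
  have hle : n₂ ≤ j * n₂₁ := h₂.2 (le_trans h₁.1 (hrefine n₂₁))
  have hlt1 : lowerSum p y₀ h (n₂ - 1) < b := by
    by_contra hc
    push_neg at hc
    have := h₂.2 hc
    omega
  have hsplit : lowerSum p y₀ h (n₂ - 1) = lowerSum p y₀ h (n₂ - j) +
      ∑ i ∈ Finset.Ioc (n₂ - j) (n₂ - 1), h * p (y₀ + (i : ℝ) * h) :=
    lower_split p y₀ h (by omega)
  set p₁ : ℝ := p (y₀ + ε * (n₂₁ : ℝ)) with hp₁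
  have htail : ((j : ℝ) - 1) * (h * p₁) <
      ∑ i ∈ Finset.Ioc (n₂ - j) (n₂ - 1), h * p (y₀ + (i : ℝ) * h) := by
    have hcard : (Finset.Ioc (n₂ - j) (n₂ - 1)).card = j - 1 := by
      rw [Nat.card_Ioc]; omega
    have hne : (Finset.Ioc (n₂ - j) (n₂ - 1)).Nonempty := by
      rw [Finset.nonempty_Ioc]; omega
    have hbound : ∀ i ∈ Finset.Ioc (n₂ - j) (n₂ - 1),
        h * p₁ < h * p (y₀ + (i : ℝ) * h) := by
      intro i hi
      rw [Finset.mem_Ioc] at hi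
      have hij : i + 1 ≤ j * n₂₁ := by omega
      have hiR : (i : ℝ) + 1 ≤ (j : ℝ) * (n₂₁ : ℝ) := by
        have : ((i + 1 : ℕ) : ℝ) ≤ ((j * n₂₁ : ℕ) : ℝ) := Nat.cast_le.mpr hij
        push_cast at this
        linarith
      have harg : y₀ + (i : ℝ) * h < y₀ + ε * (n₂₁ : ℝ) := by
        have : (i : ℝ) * h < ε * (n₂₁ : ℝ) := by
          rw [hh_def, div_eq_mul_inv]
          have e : (i : ℝ) * (ε * (j : ℝ)⁻¹) = (i : ℝ) / (j : ℝ) * ε := by ring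
          rw [e]
          have h1 : (i : ℝ) / (j : ℝ) < (n₂₁ : ℝ) := by
            rw [div_lt_iff₀ hj0]; nlinarith
          nlinarith
        linarith
      have hmem : y₀ ≤ y₀ + (i : ℝ) * h := le_add_of_nonneg_right (by positivity)
      have hmem2 : y₀ ≤ y₀ + ε * (n₂₁ : ℝ) := le_add_of_nonneg_right (by positivity)
      exact mul_lt_mul_of_pos_left (hanti hmem hmem2 harg) hh
    calc ((j : ℝ) - 1) * (h * p₁)
        = ∑ _i ∈ Finset.Ioc (n₂ - j) (n₂ - 1), h * p₁ := by
          rw [Finset.sum_const, hcard, nsmul_eq_mul, Nat.cast_sub (by omega : 1 ≤ j)]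
          push_cast
          ring
      _ < _ := Finset.sum_lt_sum_of_nonempty hne hbound
  have hlow : lowerSum p y₀ h (n₂ - j) < b - ((j : ℝ) - 1) * (h * p₁) := by linarith
  have hcast : ((n₂ - j : ℕ) : ℝ) = (n₂ : ℝ) - (j : ℝ) := by
    rw [Nat.cast_sub hn₂.le]
  have hend : p (y₀ + ε * (n₂₁ : ℝ) - ε) ≤ p (y₀ + ((n₂ - j : ℕ) : ℝ) * h) := by
    apply hmono
    · have : 0 ≤ ((n₂ - j : ℕ) : ℝ) * h := by positivity
      linarith
    · have hn2R : (n₂ : ℝ) ≤ (j : ℝ) * (n₂₁ : ℝ) := by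
        have : ((n₂ : ℕ) : ℝ) ≤ ((j * n₂₁ : ℕ) : ℝ) := Nat.cast_le.mpr hle
        push_cast at this
        linarith
      rw [hcast]
      have : ((n₂ : ℝ) - (j : ℝ)) * h ≤ ε * (n₂₁ : ℝ) - ε := by
        rw [hh_def, div_eq_mul_inv]
        have e : ((n₂ : ℝ) - (j : ℝ)) * (ε * (j : ℝ)⁻¹) = ((n₂ : ℝ) - (j : ℝ)) / (j : ℝ) * ε := by
          ring
        rw [e]
        have h1 : ((n₂ : ℝ) - (j : ℝ)) / (j : ℝ) ≤ (n₂₁ : ℝ) - 1 := by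
          rw [div_le_iff₀ hj0]
          nlinarith
        nlinarith
      linarith
  rw [trap_eq]
  have heps : ε / (2 * (j : ℝ)) = h / 2 := by rw [hh_def]; ring
  rw [heps]
  have e1 : h / 2 * (p y₀ - p (y₀ + ((n₂ - j : ℕ) : ℝ) * h)) =
      h / 2 * p y₀ - h / 2 * p (y₀ + ((n₂ - j : ℕ) : ℝ) * h) := by ring
  have e2 : h / 2 * (p y₀ - p (y₀ + ε * (n₂₁ : ℝ) - ε)) =
      h / 2 * p y₀ - h / 2 * p (y₀ + ε * (n₂₁ : ℝ) - ε) := by ring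
  have e3 : p₁ * ((j : ℝ) - 1) * h = ((j : ℝ) - 1) * (h * p₁) := by ring
  have hmul : h / 2 * p (y₀ + ε * (n₂₁ : ℝ) - ε) ≤
      h / 2 * p (y₀ + ((n₂ - j : ℕ) : ℝ) * h) :=
    mul_le_mul_of_nonneg_left hend (by positivity)
  linarith
end

section
/- (Theorem 1, termination criterion) Let y₀ ∈ ℝ, b > 0, ε > 0, and let p : ℝ → ℝ be strictly decreasing and strictly positive on [y₀, ∞). Suppose the least natural number N with S_l(ε,N) ≥ b exists and equals n₂¹, and for an integer j ≥ 2 the least N with S_l(ε/j,N) ≥ b exists, equals n₂, and satisfies n₂ > j. If j ≥ 1 + (1/2)·((p(y₀) − p(y₀ + ε·n₂¹ − ε))/p(y₀ + ε·n₂¹)), then the stopping test holds: S_t(ε/j, n₂ − j) ≤ b. -/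
open Set Finset

/-! With `h = ε / j` and `M = n₂ - j`, the trapezoidal sum exceeds the lower sum only by the
telescoped term `(h/2)(p y₀ - p (y₀ + M h))`, while minimality of `n₂` gives
`S_l(h, M) + (j - 1) h p (y₀ + (n₂ - 1) h) ≤ S_l(h, n₂ - 1) < b`. Refining the grid by the factor
`j` can only increase the lower sum of a decreasing `p`, so `n₂ ≤ j n₂¹`; hence `y₀ + M h` lies
before `y₀ + ε n₂¹ - ε` and `y₀ + (n₂ - 1) h` before `y₀ + ε n₂¹`, and the criterion on `j` is
exactly what makes the correction term fit under the `j - 1` dropped rectangles. -/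

lemma lowerSum_succ (p : ℝ → ℝ) (y₀ h : ℝ) (n : ℕ) :
    lowerSum p y₀ h (n + 1) = lowerSum p y₀ h n + h * p (y₀ + (n + 1) * h) := by
  rw [lowerSum, lowerSum, Finset.sum_Icc_succ_top (by omega)]
  push_cast
  rfl

lemma lowerSum_add (p : ℝ → ℝ) (y₀ h : ℝ) (m n : ℕ) :
    lowerSum p y₀ h (m + n) = lowerSum p y₀ h m + lowerSum p (y₀ + m * h) h n := by
  induction n with
  | zero => simp [lowerSum]
  | succ n ih =>
    rw [← add_assoc, lowerSum_succ, lowerSum_succ, ih]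
    push_cast
    ring_nf

lemma trapSum_eq_lowerSum_add (p : ℝ → ℝ) (y₀ h : ℝ) (n : ℕ) :
    trapSum p y₀ h n = lowerSum p y₀ h n + h / 2 * (p y₀ - p (y₀ + n * h)) := by
  induction n with
  | zero => simp [trapSum, lowerSum]
  | succ n ih =>
    rw [trapSum, Finset.sum_Icc_succ_top (by omega), ← trapSum, ih, lowerSum_succ]
    push_cast
    ring_nf

section Antitone

variable {p : ℝ → ℝ} {y₀ h : ℝ}

lemma le_lowerSum_of_antitoneOn (hp : AntitoneOn p (Ici y₀)) (hh : 0 ≤ h) (n : ℕ) :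
    n * (h * p (y₀ + n * h)) ≤ lowerSum p y₀ h n := by
  have hterm : ∀ i ∈ Finset.Icc 1 n, h * p (y₀ + n * h) ≤ h * p (y₀ + i * h) := by
    intro i hi
    have hin : (i : ℝ) ≤ n := by exact_mod_cast (Finset.mem_Icc.1 hi).2
    refine mul_le_mul_of_nonneg_left (hp ?_ ?_ ?_) hh
    · exact Set.mem_Ici.2 (le_add_of_nonneg_right (by positivity))
    · exact Set.mem_Ici.2 (le_add_of_nonneg_right (by positivity))
    · gcongr
  simpa [lowerSum] using Finset.card_nsmul_le_sum _ _ _ hterm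

lemma lowerSum_le_lowerSum_mul (hp : AntitoneOn p (Ici y₀)) (hh : 0 ≤ h) (j m : ℕ) :
    lowerSum p y₀ (j * h) m ≤ lowerSum p y₀ h (j * m) := by
  induction m with
  | zero => simp [lowerSum]
  | succ m ih =>
    have hblock := le_lowerSum_of_antitoneOn (y₀ := y₀ + ((j * m : ℕ) : ℝ) * h)
      (hp.mono (Ici_subset_Ici.2 (le_add_of_nonneg_right (by positivity)))) hh j
    have hpt : y₀ + ((j * m : ℕ) : ℝ) * h + j * h = y₀ + (m + 1) * (j * h) := by
      push_cast
      ring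
    rw [hpt] at hblock
    rw [lowerSum_succ, Nat.mul_succ, lowerSum_add]
    linarith

lemma trapSum_le_lowerSum_add (hp : AntitoneOn p (Ici y₀)) (hh : 0 ≤ h) (M k : ℕ)
    (hgap : p y₀ - p (y₀ + M * h) ≤ 2 * k * p (y₀ + (M + k) * h)) :
    trapSum p y₀ h M ≤ lowerSum p y₀ h (M + k) := by
  have hblock := le_lowerSum_of_antitoneOn (y₀ := y₀ + M * h)
    (hp.mono (Ici_subset_Ici.2 (le_add_of_nonneg_right (by positivity)))) hh k
  rw [add_assoc, ← add_mul] at hblock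
  rw [trapSum_eq_lowerSum_add, lowerSum_add]
  nlinarith [mul_le_mul_of_nonneg_left hgap (by positivity : (0 : ℝ) ≤ h / 2)]

lemma sub_le_of_stopping_criterion (hp : AntitoneOn p (Ici y₀)) {ε j n n₁ : ℝ}
    (hQ : 0 < p (y₀ + ε * n₁)) (hh : 0 < h) (hj : 1 ≤ j) (hjh : j * h = ε) (hjn : j ≤ n)
    (hn : n * h ≤ ε * n₁)
    (hcrit : j ≥ 1 + (1 / 2) * ((p y₀ - p (y₀ + ε * n₁ - ε)) / p (y₀ + ε * n₁))) :
    p y₀ - p (y₀ + (n - j) * h) ≤ 2 * (j - 1) * p (y₀ + ((n - j) + (j - 1)) * h) := by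
  have hstart : 0 ≤ (n - j) * h := mul_nonneg (by linarith) hh.le
  have hstep : 0 ≤ (j - 1) * h := mul_nonneg (by linarith) hh.le
  have hleft : p (y₀ + ε * n₁ - ε) ≤ p (y₀ + (n - j) * h) :=
    hp (by simp only [Set.mem_Ici]; linarith) (by simp only [Set.mem_Ici]; linarith) (by linarith)
  have hright : p (y₀ + ε * n₁) ≤ p (y₀ + ((n - j) + (j - 1)) * h) :=
    hp (by simp only [Set.mem_Ici]; linarith) (by simp only [Set.mem_Ici]; linarith) (by linarith)
  have hcrit' : p y₀ - p (y₀ + ε * n₁ - ε) ≤ 2 * (j - 1) * p (y₀ + ε * n₁) :=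
    (div_le_iff₀ hQ).1 (by linarith)
  nlinarith [mul_le_mul_of_nonneg_left hright (by linarith : (0 : ℝ) ≤ 2 * (j - 1))]

end Antitone

theorem stmt_12_general (y₀ b ε : ℝ) (hε : 0 < ε)
    (p : ℝ → ℝ)
    (hanti : StrictAntiOn p (Set.Ici y₀))
    (hpos : ∀ y ∈ Set.Ici y₀, 0 < p y)
    (n₂₁ : ℕ) (h₁ : IsLeast {N : ℕ | b ≤ lowerSum p y₀ ε N} n₂₁)
    (j : ℕ) (hj : 2 ≤ j)
    (n₂ : ℕ) (h₂ : IsLeast {N : ℕ | b ≤ lowerSum p y₀ (ε / (j : ℝ)) N} n₂)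
    (hn₂ : j < n₂)
    (hcrit : (j : ℝ) ≥ 1 + (1 / 2) *
      ((p y₀ - p (y₀ + ε * (n₂₁ : ℝ) - ε)) / p (y₀ + ε * (n₂₁ : ℝ)))) :
    trapSum p y₀ (ε / (j : ℝ)) (n₂ - j) ≤ b := by
  have hj0 : (0 : ℝ) < j := by exact_mod_cast (by omega : 0 < j)
  set h := ε / (j : ℝ)
  have hh : 0 < h := div_pos hε hj0
  have hjh : (j : ℝ) * h = ε := mul_div_cancel₀ ε hj0.ne'
  have hub : n₂ ≤ j * n₂₁ :=
    h₂.2 (h₁.1.trans (hjh ▸ lowerSum_le_lowerSum_mul hanti.antitoneOn hh.le j n₂₁))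
  have hlt : lowerSum p y₀ h (n₂ - 1) < b := lt_of_not_ge fun hle => by
    have := h₂.2 hle
    omega
  have hn : n₂ - j + (j - 1) = n₂ - 1 := by omega
  refine (trapSum_le_lowerSum_add hanti.antitoneOn hh.le _ (j - 1) ?_).trans (hn ▸ hlt.le)
  rw [Nat.cast_sub hn₂.le, Nat.cast_sub (by omega : 1 ≤ j), Nat.cast_one]
  have hub' : (n₂ : ℝ) * h ≤ ε * n₂₁ := by
    calc (n₂ : ℝ) * h ≤ (j * n₂₁ : ℕ) * h := by gcongr
      _ = ε * n₂₁ := by push_cast; rw [← hjh]; ring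
  have hmem : y₀ ≤ y₀ + ε * n₂₁ := le_add_of_nonneg_right (by positivity)
  exact sub_le_of_stopping_criterion hanti.antitoneOn (hpos _ hmem) hh
    (by exact_mod_cast (by omega : 1 ≤ j)) hjh (by exact_mod_cast hn₂.le) hub' hcrit

theorem stmt_12 (y₀ b ε : ℝ) (hb : 0 < b) (hε : 0 < ε)
    (p : ℝ → ℝ)
    (hanti : StrictAntiOn p (Set.Ici y₀))
    (hpos : ∀ y ∈ Set.Ici y₀, 0 < p y)
    (n₂₁ : ℕ) (h₁ : IsLeast {N : ℕ | b ≤ lowerSum p y₀ ε N} n₂₁)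
    (j : ℕ) (hj : 2 ≤ j)
    (n₂ : ℕ) (h₂ : IsLeast {N : ℕ | b ≤ lowerSum p y₀ (ε / (j : ℝ)) N} n₂)
    (hn₂ : j < n₂)
    (hcrit : (j : ℝ) ≥ 1 + (1 / 2) *
      ((p y₀ - p (y₀ + ε * (n₂₁ : ℝ) - ε)) / p (y₀ + ε * (n₂₁ : ℝ)))) :
    trapSum p y₀ (ε / (j : ℝ)) (n₂ - j) ≤ b :=
  stmt_12_general y₀ b ε hε p hanti hpos n₂₁ h₁ j hj n₂ h₂ hn₂ hcrit
end

section
/- (Theorem 2, necessary condition) Let y₀ ∈ ℝ, b > 0, ε > 0, and let p : ℝ → ℝ be strictly positive, strictly decreasing and convex on [y₀, ∞). Suppose the largest natural number N with S_t(ε,N) ≤ b exists, equals n₃¹, and satisfies n₃¹ ≥ 1; and for an integer j ≥ 2 the least N with S_l(ε/j,N) ≥ b exists, equals n₂, and satisfies n₂ > j. If the stopping test S_t(ε/j, n₂ − j) ≤ b holds, then j > 1 + (1/2)·(p(y₀) − p(y₀ + ε·n₃¹ − ε) − 2·p(y₀ + ε·n₃¹))/(2·p(y₀ + ε·n₃¹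 − ε)). -/
open Set Finset

lemma telescope_aux (p : ℝ → ℝ) (y₀ h : ℝ) (N : ℕ) :
    trapSum p y₀ h N = lowerSum p y₀ h N + (h/2) * (p y₀ - p (y₀ + (N:ℝ) * h)) := by
  induction N with
  | zero => simp [trapSum, lowerSum]
  | succ n ih =>
    rw [trapSum, lowerSum, Finset.sum_Icc_succ_top (by omega), Finset.sum_Icc_succ_top (by omega),
      ← trapSum, ← lowerSum, ih]
    have e1 : ((n:ℝ) + 1 - 1) * h = (n:ℝ) * h := by ring
    push_cast
    rw [e1]
    ring

lemma gaussR_aux (j : ℕ) : ∑ k ∈ Finset.Icc 1 j, (k:ℝ) = j*(j+1)/2 := by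
  induction j with
  | zero => simp
  | succ n ih =>
    rw [Finset.sum_Icc_succ_top (by omega), ih]
    push_cast; ring

lemma blockB_aux (p : ℝ → ℝ) (y₀ ε : ℝ) (hε : 0 < ε)
    (hanti : StrictAntiOn p (Set.Ici y₀))
    (hconv : ConvexOn ℝ (Set.Ici y₀) p)
    (j : ℕ) (hj : 1 ≤ j) (a : ℝ) (ha : a ∈ Set.Ici y₀) :
    ∑ k ∈ Finset.Icc 1 j, (ε/(j:ℝ)) * p (a + (k:ℝ) * (ε/(j:ℝ))) < (ε/2) * (p a + p (a+ε)) := by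
  have hj0 : (0:ℝ) < (j:ℝ) := by positivity
  have hb : a + ε ∈ Set.Ici y₀ := by simp only [Set.mem_Ici] at ha ⊢; linarith
  have hpb : p (a+ε) < p a := hanti ha hb (by linarith)
  have step1 : ∀ k ∈ Finset.Icc 1 j, (ε/(j:ℝ)) * p (a + (k:ℝ) * (ε/(j:ℝ)))
      ≤ (ε/(j:ℝ)) * p a + ((ε/((j:ℝ)*(j:ℝ))) * (p (a+ε) - p a)) * (k:ℝ) := by
    intro k hk
    simp only [Finset.mem_Icc] at hk
    have hk1 : (1:ℝ) ≤ (k:ℝ) := by exact_mod_cast hk.1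
    have hk2 : (k:ℝ) ≤ (j:ℝ) := by exact_mod_cast hk.2
    have h1 : (0:ℝ) ≤ 1 - (k:ℝ)/(j:ℝ) := by
      rw [sub_nonneg, div_le_one hj0]; exact hk2
    have h2 : (0:ℝ) ≤ (k:ℝ)/(j:ℝ) := by positivity
    have h3 : (1 - (k:ℝ)/(j:ℝ)) + (k:ℝ)/(j:ℝ) = 1 := by ring
    have hc := hconv.2 ha hb h1 h2 h3
    simp only [smul_eq_mul] at hc
    have e : (1 - (k:ℝ)/(j:ℝ)) * a + ((k:ℝ)/(j:ℝ)) * (a+ε) = a + (k:ℝ) * (ε/(j:ℝ)) := by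
      field_simp; ring
    rw [e] at hc
    have : (ε/(j:ℝ)) * p (a + (k:ℝ) * (ε/(j:ℝ)))
        ≤ (ε/(j:ℝ)) * ((1 - (k:ℝ)/(j:ℝ)) * p a + ((k:ℝ)/(j:ℝ)) * p (a+ε)) := by
      apply mul_le_mul_of_nonneg_left hc (by positivity)
    refine this.trans (le_of_eq ?_)
    field_simp; ring
  have hsum := Finset.sum_le_sum step1
  rw [Finset.sum_add_distrib, Finset.sum_const] at hsum
  have hsum2 : ∑ x ∈ Finset.Icc 1 j, (ε/((j:ℝ)*(j:ℝ))) * (p (a+ε) - p a) * (x:ℝ)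
      = (ε/((j:ℝ)*(j:ℝ))) * (p (a+ε) - p a) * ((j:ℝ)*((j:ℝ)+1)/2) := by
    rw [← Finset.mul_sum, gaussR_aux]
  rw [hsum2] at hsum
  simp only [Nat.card_Icc, Nat.add_sub_cancel, nsmul_eq_mul] at hsum
  refine hsum.trans_lt ?_
  have hjne : (j:ℝ) ≠ 0 := ne_of_gt hj0
  have hj1 : (1:ℝ) ≤ (j:ℝ) := by exact_mod_cast hj
  have expand : (j:ℝ) * (ε / (j:ℝ) * p a) + ε / ((j:ℝ)*(j:ℝ)) * (p (a+ε) - p a) * ((j:ℝ)*((j:ℝ)+1)/2)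
      = ε * p a + (ε * (p (a+ε) - p a)) * (((j:ℝ)+1)/(2*(j:ℝ))) := by
    field_simp
  rw [expand]
  have h1 : (1:ℝ)/2 < ((j:ℝ)+1)/(2*(j:ℝ)) := by
    rw [div_lt_div_iff₀ (by norm_num) (by positivity)]; nlinarith
  have h2 : ε * (p (a+ε) - p a) < 0 := by nlinarith
  nlinarith [mul_lt_mul_of_neg_left h1 h2]

lemma trapstep_aux (p : ℝ → ℝ) (y₀ ε : ℝ) (M : ℕ) :
    trapSum p y₀ ε (M+1) = trapSum p y₀ ε M
      + (ε/2)*(p (y₀+(M:ℝ)*ε) + p (y₀+(M:ℝ)*ε+ε)) := by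
  rw [trapSum, Finset.sum_Icc_succ_top (by omega), ← trapSum]
  have e1 : y₀ + (((M+1:ℕ):ℝ) - 1) * ε = y₀ + (M:ℝ)*ε := by push_cast; ring
  have e2 : y₀ + ((M+1:ℕ):ℝ) * ε = y₀ + (M:ℝ)*ε + ε := by push_cast; ring
  rw [e1, e2]

lemma decomp_aux (p : ℝ → ℝ) (y₀ ε : ℝ) (j : ℕ) (hj : 1 ≤ j) (M : ℕ) :
    lowerSum p y₀ (ε/(j:ℝ)) (j*(M+1)) = lowerSum p y₀ (ε/(j:ℝ)) (j*M)
      + ∑ k ∈ Finset.Icc 1 j, (ε/(j:ℝ)) * p ((y₀ + (M:ℝ)*ε) + (k:ℝ)*(ε/(j:ℝ))) := by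
  have hjne : (j:ℝ) ≠ 0 := by positivity
  unfold lowerSum
  rw [show Finset.Icc 1 (j*(M+1)) = Finset.Ioc 0 (j*(M+1)) from (Finset.Icc_add_one_left_eq_Ioc 0 _),
      show Finset.Icc 1 (j*M) = Finset.Ioc 0 (j*M) from (Finset.Icc_add_one_left_eq_Ioc 0 _),
      ← Finset.sum_Ioc_consecutive _ (Nat.zero_le (j*M)) (by nlinarith : j*M ≤ j*(M+1))]
  congr 1
  rw [show j*(M+1) = j*M + j from by ring,
      show Finset.Ioc (j*M) (j*M+j) = Finset.map (addLeftEmbedding (j*M)) (Finset.Ioc 0 j) from by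
        rw [Finset.map_add_left_Ioc]; simp,
      Finset.sum_map]
  rw [show Finset.Icc 1 j = Finset.Ioc 0 j from (Finset.Icc_add_one_left_eq_Ioc 0 _)]
  apply Finset.sum_congr rfl
  intro k hk
  simp only [addLeftEmbedding_apply]
  congr 2
  push_cast
  field_simp
  ring

lemma refine_le_aux (p : ℝ → ℝ) (y₀ ε : ℝ) (hε : 0 < ε)
    (hanti : StrictAntiOn p (Set.Ici y₀))
    (hconv : ConvexOn ℝ (Set.Ici y₀) p)
    (j : ℕ) (hj : 1 ≤ j) (M : ℕ) :
    lowerSum p y₀ (ε/(j:ℝ)) (j*M) ≤ trapSum p y₀ ε M := by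
  induction M with
  | zero => simp [lowerSum, trapSum]
  | succ n ih =>
    rw [decomp_aux p y₀ ε j hj n, trapstep_aux]
    have ha : y₀ + (n:ℝ)*ε ∈ Set.Ici y₀ := by
      simp only [Set.mem_Ici]; nlinarith [Nat.cast_nonneg (α := ℝ) n]
    have := blockB_aux p y₀ ε hε hanti hconv j hj _ ha
    linarith

lemma refine_lt_aux (p : ℝ → ℝ) (y₀ ε : ℝ) (hε : 0 < ε)
    (hanti : StrictAntiOn p (Set.Ici y₀))
    (hconv : ConvexOn ℝ (Set.Ici y₀) p)
    (j : ℕ) (hj : 1 ≤ j) (M : ℕ) (hM : 1 ≤ M) :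
    lowerSum p y₀ (ε/(j:ℝ)) (j*M) < trapSum p y₀ ε M := by
  obtain ⟨n, rfl⟩ : ∃ n, M = n + 1 := ⟨M - 1, by omega⟩
  rw [decomp_aux p y₀ ε j hj n, trapstep_aux]
  have ha : y₀ + (n:ℝ)*ε ∈ Set.Ici y₀ := by
    simp only [Set.mem_Ici]; nlinarith [Nat.cast_nonneg (α := ℝ) n]
  have h1 := blockB_aux p y₀ ε hε hanti hconv j hj _ ha
  have h2 := refine_le_aux p y₀ ε hε hanti hconv j hj n
  linarith

set_option maxHeartbeats 1600000
theorem stmt_14 (y₀ b ε : ℝ) (hb : 0 < b) (hε : 0 < ε)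
    (p : ℝ → ℝ)
    (hpos : ∀ y ∈ Set.Ici y₀, 0 < p y)
    (hanti : StrictAntiOn p (Set.Ici y₀))
    (hconv : ConvexOn ℝ (Set.Ici y₀) p)
    (n₃₁ : ℕ) (h₃ : IsGreatest {N : ℕ | trapSum p y₀ ε N ≤ b} n₃₁) (hn₃ : 1 ≤ n₃₁)
    (j : ℕ) (hj : 2 ≤ j)
    (n₂ : ℕ) (h₂ : IsLeast {N : ℕ | b ≤ lowerSum p y₀ (ε / (j : ℝ)) N} n₂)
    (hn₂ : j < n₂)
    (hstop : trapSum p y₀ (ε / (j : ℝ)) (n₂ - j) ≤ b) :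
    (j : ℝ) > 1 + (1 / 2) *
      ((p y₀ - p (y₀ + ε * (n₃₁ : ℝ) - ε) - 2 * p (y₀ + ε * (n₃₁ : ℝ))) /
        (2 * p (y₀ + ε * (n₃₁ : ℝ) - ε))) := by
  have hj1 : 1 ≤ j := by omega
  have ht0 : (0:ℝ) < (j:ℝ) := by positivity
  have ht2 : (2:ℝ) ≤ (j:ℝ) := by exact_mod_cast hj
  set h' : ℝ := ε / (j:ℝ) with hh'def
  have hh' : 0 < h' := by positivity
  have hjh : (j:ℝ) * h' = ε := by rw [hh'def]; field_simp
  have hn₃R : (1:ℝ) ≤ (n₃₁:ℝ) := by exact_mod_cast hn₃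
  -- memberships of grid points
  have hYm : y₀ + ε * (n₃₁:ℝ) ∈ Set.Ici y₀ := by
    simp only [Set.mem_Ici]; nlinarith
  have hYem : y₀ + ε * (n₃₁:ℝ) - ε ∈ Set.Ici y₀ := by
    simp only [Set.mem_Ici]; nlinarith
  set c : ℝ := p (y₀ + ε * (n₃₁:ℝ) - ε) with hcdef
  set d : ℝ := p (y₀ + ε * (n₃₁:ℝ)) with hddef
  have hcd : d < c := hanti hYem hYm (by linarith)
  have hd0 : 0 < d := hpos _ hYm
  have hc0 : 0 < c := hpos _ hYem
  -- Step A : j * n₃₁ < n₂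
  have hn2 : j * n₃₁ < n₂ := by
    by_contra hcon
    push_neg at hcon
    have hmono : lowerSum p y₀ h' n₂ ≤ lowerSum p y₀ h' (j * n₃₁) := by
      apply Finset.sum_le_sum_of_subset_of_nonneg (Finset.Icc_subset_Icc_right hcon)
      intro i _ _
      have : y₀ + (i:ℝ) * h' ∈ Set.Ici y₀ := by
        simp only [Set.mem_Ici]; nlinarith [Nat.cast_nonneg (α := ℝ) i]
      have := hpos _ this
      positivity
    have hlt := refine_lt_aux p y₀ ε hε hanti hconv j hj1 n₃₁ hn₃
    have := h₂.1
    have := h₃.1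
    simp only [Set.mem_setOf_eq] at *
    linarith
  -- Step B : key inequality
  set m : ℕ := n₂ - j with hmdef
  have hmn : m + j = n₂ := by omega
  have hmR : (m:ℝ) = (n₂:ℝ) - (j:ℝ) := by
    rw [hmdef, Nat.cast_sub (le_of_lt hn₂)]
  set x : ℝ := y₀ + (m:ℝ) * h' with hxdef
  have hxm : x ∈ Set.Ici y₀ := by
    simp only [Set.mem_Ici, hxdef]; nlinarith [Nat.cast_nonneg (α := ℝ) m]
  have hsplit : lowerSum p y₀ h' n₂
      = lowerSum p y₀ h' m + ∑ i ∈ Finset.Ioc m n₂, h' * p (y₀ + (i:ℝ) * h') := by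
    rw [lowerSum, lowerSum,
      show Finset.Icc 1 n₂ = Finset.Ioc 0 n₂ from (Finset.Icc_add_one_left_eq_Ioc 0 _),
      show Finset.Icc 1 m = Finset.Ioc 0 m from (Finset.Icc_add_one_left_eq_Ioc 0 _),
      ← Finset.sum_Ioc_consecutive _ (Nat.zero_le m) (by omega : m ≤ n₂)]
  have htail : ∑ i ∈ Finset.Ioc m n₂, h' * p (y₀ + (i:ℝ) * h')
      ≤ (j:ℝ) * (h' * p (x + h')) := by
    have hcard : (Finset.Ioc m n₂).card = j := by
      rw [Nat.card_Ioc]; omega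
    have hbd : ∀ i ∈ Finset.Ioc m n₂, h' * p (y₀ + (i:ℝ) * h') ≤ h' * p (x + h') := by
      intro i hi
      simp only [Finset.mem_Ioc] at hi
      have hi1 : (m:ℝ) + 1 ≤ (i:ℝ) := by exact_mod_cast hi.1
      have hxh : x + h' ≤ y₀ + (i:ℝ) * h' := by
        simp only [hxdef]; nlinarith
      have hmem : y₀ + (i:ℝ) * h' ∈ Set.Ici y₀ := by
        simp only [Set.mem_Ici]; nlinarith [Nat.cast_nonneg (α := ℝ) i]
      have hmem2 : x + h' ∈ Set.Ici y₀ := by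
        simp only [Set.mem_Ici, hxdef]; nlinarith [Nat.cast_nonneg (α := ℝ) m]
      exact mul_le_mul_of_nonneg_left (hanti.antitoneOn hmem2 hmem hxh) (le_of_lt hh')
    calc ∑ i ∈ Finset.Ioc m n₂, h' * p (y₀ + (i:ℝ) * h')
        ≤ (Finset.Ioc m n₂).card • (h' * p (x + h')) := Finset.sum_le_card_nsmul _ _ _ hbd
      _ = (j:ℝ) * (h' * p (x + h')) := by rw [hcard, nsmul_eq_mul]
  have htel := telescope_aux p y₀ h' m
  have hL := h₂.1
  simp only [Set.mem_setOf_eq] at hL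
  have hstop' : trapSum p y₀ h' m ≤ b := hstop
  rw [hsplit] at hL
  rw [htel, ← hxdef] at hstop'
  clear_value h' c d m x
  have key0 : (h'/2) * (p y₀ - p x) ≤ (j:ℝ) * (h' * p (x + h')) := by
    linarith [hL, htail, hstop']
  have key : p y₀ - p x ≤ 2 * (j:ℝ) * p (x + h') := by
    nlinarith [key0, hh']
  -- Step C : position bounds and convexity on the coarse grid
  have hn2R : (j:ℝ) * (n₃₁:ℝ) + 1 ≤ (n₂:ℝ) := by
    have : j * n₃₁ + 1 ≤ n₂ := hn2
    exact_mod_cast this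
  have hmge : (j:ℝ) * (n₃₁:ℝ) - (j:ℝ) + 1 ≤ (m:ℝ) := by
    rw [hmR]; linarith
  have hx : (y₀ + ε * (n₃₁:ℝ) - ε) + h' ≤ x := by
    have h5 : ((j:ℝ) * (n₃₁:ℝ) - (j:ℝ) + 1) * h' ≤ (m:ℝ) * h' :=
      mul_le_mul_of_nonneg_right hmge (le_of_lt hh')
    rw [hxdef, ← hjh]
    nlinarith [h5]
  have hconv1 : p ((y₀ + ε * (n₃₁:ℝ) - ε) + h') ≤ (1 - 1/(j:ℝ)) * c + (1/(j:ℝ)) * d := by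
    have h1 : (0:ℝ) ≤ 1 - 1/(j:ℝ) := by
      rw [sub_nonneg]; rw [div_le_one ht0]; linarith
    have h2 : (0:ℝ) ≤ 1/(j:ℝ) := by positivity
    have h3 : (1 - 1/(j:ℝ)) + 1/(j:ℝ) = 1 := by ring
    have hc := hconv.2 hYem hYm h1 h2 h3
    simp only [smul_eq_mul] at hc
    have e : (1 - 1/(j:ℝ)) * (y₀ + ε * (n₃₁:ℝ) - ε) + (1/(j:ℝ)) * (y₀ + ε * (n₃₁:ℝ))
        = (y₀ + ε * (n₃₁:ℝ) - ε) + h' := by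
      rw [hh'def]; field_simp; ring
    rw [e] at hc
    rw [hcdef, hddef]; exact hc
  have hconv2 : p ((y₀ + ε * (n₃₁:ℝ) - ε) + 2*h') ≤ (1 - 2/(j:ℝ)) * c + (2/(j:ℝ)) * d := by
    have h1 : (0:ℝ) ≤ 1 - 2/(j:ℝ) := by
      rw [sub_nonneg]; rw [div_le_one ht0]; linarith
    have h2 : (0:ℝ) ≤ 2/(j:ℝ) := by positivity
    have h3 : (1 - 2/(j:ℝ)) + 2/(j:ℝ) = 1 := by ring
    have hc := hconv.2 hYem hYm h1 h2 h3
    simp only [smul_eq_mul] at hc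
    have e : (1 - 2/(j:ℝ)) * (y₀ + ε * (n₃₁:ℝ) - ε) + (2/(j:ℝ)) * (y₀ + ε * (n₃₁:ℝ))
        = (y₀ + ε * (n₃₁:ℝ) - ε) + 2*h' := by
      rw [hh'def]; field_simp; ring
    rw [e] at hc
    rw [hcdef, hddef]; exact hc
  have hYehm : (y₀ + ε * (n₃₁:ℝ) - ε) + h' ∈ Set.Ici y₀ :=
    Set.mem_Ici.mpr (by have := Set.mem_Ici.mp hYem; linarith)
  have hYeh2m : (y₀ + ε * (n₃₁:ℝ) - ε) + 2*h' ∈ Set.Ici y₀ :=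
    Set.mem_Ici.mpr (by have := Set.mem_Ici.mp hYem; linarith)
  have hxhm : x + h' ∈ Set.Ici y₀ :=
    Set.mem_Ici.mpr (by have := Set.mem_Ici.mp hxm; linarith)
  have px_le : p x ≤ (1 - 1/(j:ℝ)) * c + (1/(j:ℝ)) * d :=
    le_trans (hanti.antitoneOn hYehm hxm hx) hconv1
  have pxh_le : p (x + h') ≤ (1 - 2/(j:ℝ)) * c + (2/(j:ℝ)) * d :=
    le_trans (hanti.antitoneOn hYeh2m hxhm (by linarith)) hconv2
  -- clear denominators
  have A1 : (j:ℝ) * p x ≤ ((j:ℝ) - 1) * c + d := by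
    have := mul_le_mul_of_nonneg_left px_le (le_of_lt ht0)
    refine this.trans (le_of_eq ?_)
    field_simp
  have A2 : (j:ℝ) * p (x + h') ≤ ((j:ℝ) - 2) * c + 2 * d := by
    have := mul_le_mul_of_nonneg_left pxh_le (le_of_lt ht0)
    refine this.trans (le_of_eq ?_)
    field_simp
  have B1 : (j:ℝ) * (p y₀ - p x) ≤ (j:ℝ) * (2 * (j:ℝ) * p (x + h')) :=
    mul_le_mul_of_nonneg_left key (le_of_lt ht0)
  have B2 : (2*(j:ℝ)) * ((j:ℝ) * p (x + h')) ≤ (2*(j:ℝ)) * (((j:ℝ) - 2) * c + 2 * d) :=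
    mul_le_mul_of_nonneg_left A2 (by positivity)
  have hfin : (j:ℝ) * p y₀ ≤ (2*(j:ℝ)^2 - 3*(j:ℝ) - 1) * c + (4*(j:ℝ) + 1) * d := by
    nlinarith [B1, B2, A1]
  -- final goal
  have hgoal : p y₀ - c - 2*d < 2*((j:ℝ) - 1) * (2*c) := by
    nlinarith [hfin, mul_pos (sub_pos.mpr hcd) ht0,
      mul_nonneg (mul_nonneg (le_of_lt ht0) (by linarith : (0:ℝ) ≤ (j:ℝ) - 1)) (le_of_lt hc0),
      mul_pos hc0 ht0, mul_pos hd0 ht0]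
  rw [gt_iff_lt]
  have h2c : (0:ℝ) < 2*c := by linarith
  have : (p y₀ - c - 2*d) / (2*c) < 2*((j:ℝ) - 1) := by
    rw [div_lt_iff₀ h2c]; linarith [hgoal]
  linarith
end
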